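/- If the uniform ensemble {2^{-n}, ρ_x} over n-bit strings satisfies Σ_x p^B_{x|x} ≤ 2^b for every POVM (where p^B_{x|x} is the probability of correctly identifying x), then ξ(E) := n − H₂(ρ_AB|ρ) ≤ b. -/

import Mathlib

/-!
With `R = ρ^{-1/2}`, the pretty good measurement `M_x = 2^{-n} R ρ_x R` is a POVM, and
`Tr(((I ⊗ R) ρ_AB)²) = 2^{-n} ∑_x Tr(M_x ρ_x)` (the guessing lemma). The concealing hypothesis
bounds the sum by `2^b`, so `2^{-H₂(ρ_AB|ρ)} ≤ 2^{b-n}`. Taking logarithms needs the sum to be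
positive: `Tr(R ρ_x R ρ_x)` is the squared Hilbert–Schmidt norm of `R^{1/2} ρ_x R^{1/2}`, so it
vanishes only when `M_x = 0`, and not every `M_x` can vanish since they sum to `1`.
-/

open Matrix BigOperators ComplexOrder Kronecker

namespace Matrix

section cq
variable {ι d α : Type*} [Fintype ι] [DecidableEq ι] [Fintype d] [CommSemiring α]

def cqOperator (A : ι → Matrix d d α) : Matrix (ι × d) (ι × d) α :=
  ∑ x, single x x 1 ⊗ₖ A x

lemma one_kronecker_mul_cqOperator (R : Matrix d d α) (A : ι → Matrix d d α) :
    ((1 : Matrix ι ι α) ⊗ₖ R) * cqOperator A = cqOperator fun x => R * A x := by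
  simp only [cqOperator, Finset.mul_sum, ← mul_kronecker_mul, Matrix.one_mul]

lemma cqOperator_mul_cqOperator (A B : ι → Matrix d d α) :
    cqOperator A * cqOperator B = cqOperator fun x => A x * B x := by
  simp only [cqOperator, Finset.sum_mul_sum, ← mul_kronecker_mul]
  refine Finset.sum_congr rfl fun x _ => ?_
  rw [Finset.sum_eq_single x (fun y _ hyx => by rw [single_mul_single_of_ne (h := hyx.symm),
    zero_kronecker]) (by simp), single_mul_single_same, mul_one]

lemma trace_cqOperator (A : ι → Matrix d d α) :
    (cqOperator A).trace = ∑ x, (A x).trace := by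
  simp [cqOperator, trace_sum, trace_kronecker]

end cq

lemma trace_mul_self_mul_mul_self_mul {d α : Type*} [Fintype d] [CommSemiring α]
    (S ρ : Matrix d d α) : (S * S * ρ * (S * S) * ρ).trace = (S * ρ * S * (S * ρ * S)).trace := by
  rw [show S * S * ρ * (S * S) * ρ = S * (S * ρ * S * S * ρ) by noncomm_ring, trace_mul_comm]
  congr 1
  noncomm_ring

lemma mul_mul_eq_one_of_mul_self_eq_inv {d α : Type*} [Fintype d] [DecidableEq d] [CommRing α]
    {A R : Matrix d d α} (hA : IsUnit A) (hRR : R * R = A⁻¹) : R * A * R = 1 := by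
  rw [mul_eq_one_comm, ← mul_assoc, hRR, nonsing_inv_mul _ ((isUnit_iff_isUnit_det A).1 hA)]

section sqrt
variable {d 𝕜 : Type*} [Fintype d] [RCLike 𝕜]

open scoped MatrixOrder in
lemma PosSemidef.exists_isHermitian_mul_self_eq {R : Matrix d d 𝕜} (hR : R.PosSemidef) :
    ∃ S : Matrix d d 𝕜, S.IsHermitian ∧ S * S = R := by
  classical
  exact ⟨CFC.sqrt R, (CFC.sqrt_nonneg R).posSemidef.1, CFC.sqrt_mul_sqrt_self R hR.nonneg⟩

variable {R ρ : Matrix d d 𝕜}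

lemma PosSemidef.trace_mul_mul_mul_nonneg (hR : R.PosSemidef) (hρ : ρ.IsHermitian) :
    0 ≤ (R * ρ * R * ρ).trace := by
  obtain ⟨S, hS, rfl⟩ := hR.exists_isHermitian_mul_self_eq
  have hSρS : (S * ρ * S)ᴴ = S * ρ * S := by
    simpa only [hS.eq] using (isHermitian_conjTranspose_mul_mul S hρ).eq
  have h := (posSemidef_conjTranspose_mul_self (S * ρ * S)).trace_nonneg
  rwa [hSρS, ← trace_mul_self_mul_mul_self_mul] at h

lemma PosSemidef.mul_mul_eq_zero_of_trace_mul_mul_mul_eq_zero (hR : R.PosSemidef)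
    (hρ : ρ.IsHermitian) (h : (R * ρ * R * ρ).trace = 0) : R * ρ * R = 0 := by
  obtain ⟨S, hS, rfl⟩ := hR.exists_isHermitian_mul_self_eq
  have hSρS : (S * ρ * S)ᴴ = S * ρ * S := by
    simpa only [hS.eq] using (isHermitian_conjTranspose_mul_mul S hρ).eq
  have hzero : S * ρ * S = 0 := by
    rw [← trace_conjTranspose_mul_self_eq_zero_iff, hSρS,
      ← trace_mul_self_mul_mul_self_mul, h]
  rw [show S * S * ρ * (S * S) = S * (S * ρ * S) * S by noncomm_ring, hzero, mul_zero, zero_mul]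

end sqrt

section PrettyGood
variable {ι d : Type*} [Fintype d] {p : ι → ℂ} {R : Matrix d d ℂ} {ρ : ι → Matrix d d ℂ}

def prettyGoodMeasurement (p : ι → ℂ) (R : Matrix d d ℂ) (ρ : ι → Matrix d d ℂ) (x : ι) :
    Matrix d d ℂ :=
  p x • (R * ρ x * R)

lemma posSemidef_prettyGoodMeasurement (hp : ∀ x, 0 ≤ p x) (hR : R.IsHermitian)
    (hρ : ∀ x, (ρ x).PosSemidef) (x : ι) : (prettyGoodMeasurement p R ρ x).PosSemidef := by
  have h := (hρ x).conjTranspose_mul_mul_same R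
  rw [hR.eq] at h
  exact h.smul (hp x)

lemma sum_prettyGoodMeasurement [Fintype ι] [DecidableEq d]
    (hρbar : IsUnit (∑ x, p x • ρ x)) (hRR : R * R = (∑ x, p x • ρ x)⁻¹) :
    ∑ x, prettyGoodMeasurement p R ρ x = 1 := by
  rw [← mul_mul_eq_one_of_mul_self_eq_inv hρbar hRR, Finset.mul_sum, Finset.sum_mul]
  simp only [prettyGoodMeasurement, mul_smul_comm, smul_mul_assoc]

/-- The guessing lemma: when `R * R = (∑ x, p x • ρ x)⁻¹`, the left side is
`2^{-H₂(ρ_AB|ρ)}` for the cq-state with prior `p`. -/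
lemma trace_collision_eq_sum_mul_trace_prettyGoodMeasurement_mul [Fintype ι] [DecidableEq ι]
    (p : ι → ℂ) (R : Matrix d d ℂ) (ρ : ι → Matrix d d ℂ) :
    ((((1 : Matrix ι ι ℂ) ⊗ₖ R) * cqOperator (fun x => p x • ρ x)) *
        (((1 : Matrix ι ι ℂ) ⊗ₖ R) * cqOperator (fun x => p x • ρ x))).trace =
      ∑ x, p x * (prettyGoodMeasurement p R ρ x * ρ x).trace := by
  rw [one_kronecker_mul_cqOperator, cqOperator_mul_cqOperator, trace_cqOperator]
  refine Finset.sum_congr rfl fun x _ => ?_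
  simp only [prettyGoodMeasurement, mul_smul_comm, smul_mul_assoc, trace_smul, smul_eq_mul,
    ← mul_assoc]

lemma sum_re_trace_prettyGoodMeasurement_mul_pos [Fintype ι] [DecidableEq d] [Nonempty d]
    (hp : ∀ x, 0 ≤ p x) (hR : R.PosSemidef) (hρ : ∀ x, (ρ x).IsHermitian)
    (hsum : ∑ x, prettyGoodMeasurement p R ρ x = 1) :
    0 < ∑ x, ((prettyGoodMeasurement p R ρ x * ρ x).trace).re := by
  have hnonneg : ∀ x, 0 ≤ (prettyGoodMeasurement p R ρ x * ρ x).trace := fun x => by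
    rw [prettyGoodMeasurement, smul_mul_assoc, trace_smul, smul_eq_mul]
    exact mul_nonneg (hp x) (hR.trace_mul_mul_mul_nonneg (hρ x))
  have hvanish : ∀ x, (prettyGoodMeasurement p R ρ x * ρ x).trace = 0 →
      prettyGoodMeasurement p R ρ x = 0 := fun x h => by
    rw [prettyGoodMeasurement, smul_mul_assoc, trace_smul, smul_eq_mul, mul_eq_zero] at h
    rcases h with hpx | htr
    · rw [prettyGoodMeasurement, hpx, zero_smul]
    · rw [prettyGoodMeasurement, hR.mul_mul_eq_zero_of_trace_mul_mul_mul_eq_zero (hρ x) htr,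
        smul_zero]
  rw [← Complex.re_sum]
  refine (Complex.pos_iff.1 ((Finset.sum_nonneg fun x _ => hnonneg x).lt_of_ne fun h => ?_)).1
  refine one_ne_zero (hsum.symm.trans (Finset.sum_eq_zero fun x _ => hvanish x ?_))
  exact (Finset.sum_eq_zero_iff_of_nonneg fun x _ => hnonneg x).1 h.symm x (Finset.mem_univ x)

end PrettyGood

end Matrix

/-- If the uniform ensemble over `n`-bit strings satisfies `∑_x p^B_{x|x} ≤ 2^b` for every
POVM, then `ξ(E) = n − H₂(ρ_AB|ρ) ≤ b`. -/
theorem concealing_bounds_xi {n : ℕ} {d : Type*} [Fintype d] [DecidableEq d] (b : ℝ)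
    (ρ : (Fin n → Bool) → Matrix d d ℂ)
    (hρ : ∀ x, (ρ x).PosSemidef) (hρtr : ∀ x, (ρ x).trace = 1)
    (ρbar : Matrix d d ℂ) (hρbar : ρbar = ∑ x, ((2 : ℂ) ^ n)⁻¹ • ρ x)
    (hpd : ρbar.PosDef)
    (R : Matrix d d ℂ) (hR : R.PosSemidef) (hRR : R * R = ρbar⁻¹)
    (ρAB : Matrix ((Fin n → Bool) × d) ((Fin n → Bool) × d) ℂ)
    (hρAB : ρAB = ∑ x, ((2 : ℂ) ^ n)⁻¹ • ((Matrix.single x x 1) ⊗ₖ ρ x))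
    (hConcealing : ∀ M : (Fin n → Bool) → Matrix d d ℂ,
      (∀ x, (M x).PosSemidef) → (∑ x, M x = (1 : Matrix d d ℂ)) →
      ∑ x, ((M x * ρ x).trace).re ≤ (2 : ℝ) ^ b) :
    (n : ℝ) - (-Real.logb 2
        ((((((1 : Matrix (Fin n → Bool) (Fin n → Bool) ℂ) ⊗ₖ R) * ρAB) *
            (((1 : Matrix (Fin n → Bool) (Fin n → Bool) ℂ) ⊗ₖ R) * ρAB)).trace).re))
      ≤ b := by
  have : Nonempty d := by
    by_contra h
    simpa [not_nonempty_iff.1 h, trace] using hρtr 0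
  set M := prettyGoodMeasurement (fun _ => ((2 : ℂ) ^ n)⁻¹) R ρ
  have hp : ∀ x : Fin n → Bool, (0 : ℂ) ≤ ((2 : ℂ) ^ n)⁻¹ := fun _ => by positivity
  have hM_sum : ∑ x, M x = 1 :=
    sum_prettyGoodMeasurement (hρbar ▸ hpd.isUnit) (hρbar ▸ hRR)
  have hguess := hConcealing M (posSemidef_prettyGoodMeasurement hp hR.1 hρ) hM_sum
  have hguess_pos := sum_re_trace_prettyGoodMeasurement_mul_pos hp hR (fun x => (hρ x).1) hM_sum
  rw [show ρAB = cqOperator fun x => ((2 : ℂ) ^ n)⁻¹ • ρ x by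
      simp only [hρAB, cqOperator, kronecker_smul],
    trace_collision_eq_sum_mul_trace_prettyGoodMeasurement_mul, ← Finset.mul_sum]
  nth_rw 1 [show ((2 : ℂ) ^ n)⁻¹ = (((2 : ℝ) ^ n)⁻¹ : ℝ) by push_cast; rfl]
  rw [Complex.re_ofReal_mul, Complex.re_sum, Real.logb_mul (by positivity) hguess_pos.ne',
    Real.logb_inv, Real.logb_pow, Real.logb_self_eq_one one_lt_two]
  have := Real.logb_le_logb_of_le one_lt_two hguess_pos hguess
  rw [Real.logb_rpow two_pos one_lt_two.ne'] at this
  linarith
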